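/- Let f, g : [0,1] → ℝ be continuous functions. Then the upper box-counting dimension of the graph of the product f·g satisfies dim_B̄ G(f·g) ≤ max{dim_B̄ G(f), dim_B̄ G(g)}. -/

import Mathlib

open Set Filter Metric

noncomputable def coverNum {α : Type*} [PseudoMetricSpace α] (F : Set α) (δ : ℝ) : ℕ :=
  sInf {n : ℕ | ∃ t : Finset α, t.card = n ∧ F ⊆ ⋃ p ∈ t, Metric.closedBall p δ}

noncomputable def upperBoxDim {α : Type*} [PseudoMetricSpace α] (F : Set α) : ℝ :=
  Filter.limsup (fun δ : ℝ => Real.log (coverNum F δ) / -Real.log δ)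
    (nhdsWithin (0 : ℝ) (Set.Ioi 0))

noncomputable def lowerBoxDim {α : Type*} [PseudoMetricSpace α] (F : Set α) : ℝ :=
  Filter.liminf (fun δ : ℝ => Real.log (coverNum F δ) / -Real.log δ)
    (nhdsWithin (0 : ℝ) (Set.Ioi 0))

/-- Graph of `f` over the set `X`. -/
def fnGraphOn (f : ℝ → ℝ) (X : Set ℝ) : Set (ℝ × ℝ) := (fun x => (x, f x)) '' X

/-- Graph of `f` over `[0,1]`. -/
def G (f : ℝ → ℝ) : Set (ℝ × ℝ) := fnGraphOn f (Set.Icc 0 1)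

/-!
Cut `[0,1]` into columns of width `δ`. For continuous `h`, the number of `δ`-balls needed to
cover the graph of `h` is comparable to `δ⁻¹ (1 + ∑ⱼ diam h(columnⱼ))`: stacking balls over each
column gives the upper bound; conversely `h(columnⱼ)` is an interval, covered by the balls that
meet the `j`-th column, and each ball meets at most four columns. As
`diam (fg)(I) ≤ B (diam f(I) + diam g(I))` when `|f|, |g| ≤ B`, the covering numbers satisfy
`N_δ(fg) ≤ (4B + 3) (N_δ(f) + N_δ(g))`, and a constant factor disappears from
`log N_δ / -log δ` as `δ → 0`.
-/

open Topology

section CoverNum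

variable {α β : Type*} [PseudoMetricSpace α] [PseudoMetricSpace β]

lemma coverNum_le_card {F : Set α} {δ : ℝ} (t : Finset α)
    (ht : F ⊆ ⋃ p ∈ t, closedBall p δ) : coverNum F δ ≤ t.card :=
  Nat.sInf_le ⟨t, rfl, ht⟩

lemma TotallyBounded.exists_card_eq_coverNum {F : Set α} (hF : TotallyBounded F) {δ : ℝ}
    (hδ : 0 < δ) : ∃ t : Finset α, t.card = coverNum F δ ∧ F ⊆ ⋃ p ∈ t, closedBall p δ := by
  obtain ⟨s, hs, hFs⟩ := totallyBounded_iff.1 hF δ hδ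
  have hne : {n : ℕ | ∃ t : Finset α, t.card = n ∧ F ⊆ ⋃ p ∈ t, closedBall p δ}.Nonempty :=
    ⟨_, hs.toFinset, rfl, by simpa using hFs.trans (iUnion₂_mono fun p _ => ball_subset_closedBall)⟩
  exact Nat.sInf_mem hne

lemma coverNum_mono {A B : Set α} (hB : TotallyBounded B) (hAB : A ⊆ B) {δ : ℝ} (hδ : 0 < δ) :
    coverNum A δ ≤ coverNum B δ := by
  obtain ⟨t, ht, hBt⟩ := hB.exists_card_eq_coverNum hδ
  exact ht ▸ coverNum_le_card t (hAB.trans hBt)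

lemma coverNum_biUnion_le {ι : Type*} (s : Finset ι) {F : ι → Set α}
    (hF : ∀ i ∈ s, TotallyBounded (F i)) {δ : ℝ} (hδ : 0 < δ) :
    coverNum (⋃ i ∈ s, F i) δ ≤ ∑ i ∈ s, coverNum (F i) δ := by
  classical
  choose! t ht hFt using fun i hi => (hF i hi).exists_card_eq_coverNum hδ
  calc coverNum (⋃ i ∈ s, F i) δ ≤ (s.biUnion t).card := by
        refine coverNum_le_card _ ?_
        rw [Finset.set_biUnion_biUnion]
        exact iUnion₂_mono hFt
    _ ≤ ∑ i ∈ s, (t i).card := Finset.card_biUnion_le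
    _ = ∑ i ∈ s, coverNum (F i) δ := Finset.sum_congr rfl ht

lemma coverNum_prod_le {A : Set α} {B : Set β} (hA : TotallyBounded A) (hB : TotallyBounded B)
    {δ : ℝ} (hδ : 0 < δ) : coverNum (A ×ˢ B) δ ≤ coverNum A δ * coverNum B δ := by
  obtain ⟨s, hs, hAs⟩ := hA.exists_card_eq_coverNum hδ
  obtain ⟨t, ht, hBt⟩ := hB.exists_card_eq_coverNum hδ
  rw [← hs, ← ht, ← Finset.card_product]
  refine coverNum_le_card _ fun p hp => ?_
  obtain ⟨a, ha, hpa⟩ := mem_iUnion₂.1 (hAs hp.1)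
  obtain ⟨b, hb, hpb⟩ := mem_iUnion₂.1 (hBt hp.2)
  refine mem_iUnion₂.2 ⟨(a, b), Finset.mem_product.2 ⟨ha, hb⟩, ?_⟩
  rw [← closedBall_prod_same]
  exact ⟨hpa, hpb⟩

lemma coverNum_closedBall_le_one (x : α) (δ : ℝ) : coverNum (closedBall x δ) δ ≤ 1 :=
  coverNum_le_card {x} (by simp)

end CoverNum

namespace Real

lemma coverNum_le_floor_diam_div_add_one {S : Set ℝ} (hS : Bornology.IsBounded S) {δ : ℝ}
    (hδ : 0 < δ) : coverNum S δ ≤ ⌊diam S / (2 * δ)⌋₊ + 1 := by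
  set K := ⌊diam S / (2 * δ)⌋₊ + 1
  have hcard : ((Finset.range K).image fun k : ℕ => sInf S + (2 * k + 1) * δ).card ≤ K :=
    Finset.card_image_le.trans (Finset.card_range K).le
  refine (coverNum_le_card _ fun y hy => ?_).trans hcard
  set k := ⌊(y - sInf S) / (2 * δ)⌋₊
  have hy₀ : 0 ≤ y - sInf S := sub_nonneg.2 (csInf_le hS.bddBelow hy)
  have hyS : y - sInf S ≤ diam S := by
    rw [diam_eq hS]
    linarith [le_csSup hS.bddAbove hy]
  have hk : k < K := Nat.lt_succ_of_le (Nat.floor_mono (by gcongr))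
  have hk₁ : k * (2 * δ) ≤ y - sInf S :=
    (le_div_iff₀ (by positivity)).1 (Nat.floor_le (by positivity))
  have hk₂ : y - sInf S < (k + 1) * (2 * δ) :=
    (div_lt_iff₀ (by positivity)).1 (Nat.lt_floor_add_one _)
  refine mem_iUnion₂.2 ⟨_, Finset.mem_image_of_mem _ (Finset.mem_range.2 hk), ?_⟩
  rw [mem_closedBall, dist_eq, abs_le]
  constructor <;> linarith

lemma diam_le_of_subset_biUnion_closedBall {ι : Type*} {S : Set ℝ} (hS : IsPreconnected S)
    {t : Finset ι} {c : ι → ℝ} {δ : ℝ} (hδ : 0 ≤ δ) (hSt : S ⊆ ⋃ i ∈ t, closedBall (c i) δ) :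
    diam S ≤ 2 * δ * t.card := by
  refine diam_le_of_forall_dist_le (by positivity) fun a ha b hb => ?_
  have hvol : MeasureTheory.volume (uIcc a b) ≤
      ∑ i ∈ t, MeasureTheory.volume (closedBall (c i) δ) :=
    (MeasureTheory.measure_mono (((isPreconnected_iff_ordConnected.1 hS).uIcc_subset ha hb).trans
      hSt)).trans (MeasureTheory.measure_biUnion_finset_le t _)
  simp only [volume_interval, volume_closedBall, Finset.sum_const, nsmul_eq_mul] at hvol
  rw [← ENNReal.ofReal_natCast, ← ENNReal.ofReal_mul (by positivity),
    ENNReal.ofReal_le_ofReal_iff (by positivity)] at hvol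
  rw [dist_comm, dist_eq]
  linarith

lemma log_natCast_le_log_of_le {n : ℕ} {x : ℝ} (hx : 1 ≤ x) (hn : (n : ℝ) ≤ x) :
    log n ≤ log x := by
  rcases n.eq_zero_or_pos with rfl | hn₀
  · simpa using log_nonneg hx
  · exact log_le_log (by exact_mod_cast hn₀) hn

lemma monotone_log_natCast : Monotone fun n : ℕ => log n := by
  intro m n hmn
  rcases n.eq_zero_or_pos with rfl | hn
  · rw [Nat.le_zero.1 hmn]
  · exact log_natCast_le_log_of_le (by exact_mod_cast hn) (by exact_mod_cast hmn)

end Real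

section BoxDimension

variable {α β γ : Type*} [PseudoMetricSpace α] [PseudoMetricSpace β] [PseudoMetricSpace γ]

noncomputable def boxRatio (F : Set α) (δ : ℝ) : ℝ :=
  Real.log (coverNum F δ) / -Real.log δ

lemma tendsto_div_neg_log_nhdsGT_zero (c : ℝ) :
    Tendsto (fun δ => c / -Real.log δ) (𝓝[>] 0) (𝓝 0) :=
  tendsto_const_nhds.div_atTop (tendsto_neg_atBot_atTop.comp Real.tendsto_log_nhdsGT_zero)

lemma boxRatio_nonneg (F : Set α) {δ : ℝ} (hδ₀ : 0 < δ) (hδ₁ : δ < 1) : 0 ≤ boxRatio F δ :=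
  div_nonneg (Real.log_natCast_nonneg _) (neg_nonneg.2 (Real.log_nonpos hδ₀.le hδ₁.le))

lemma boxRatio_le_of_coverNum_le {F : Set α} {C δ : ℝ} {k : ℕ} (hC : 1 ≤ C) (hδ₀ : 0 < δ)
    (hδ₁ : δ < 1) (hF : (coverNum F δ : ℝ) ≤ C / δ ^ k) :
    boxRatio F δ ≤ Real.log C / -Real.log δ + k := by
  have hL : 0 < -Real.log δ := neg_pos.2 (Real.log_neg hδ₀ hδ₁)
  have hCδ : 1 ≤ C / δ ^ k :=
    (one_le_div (pow_pos hδ₀ k)).2 ((pow_le_one₀ hδ₀.le hδ₁.le).trans hC)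
  have hlog : Real.log (coverNum F δ) ≤ Real.log C + k * -Real.log δ :=
    calc Real.log (coverNum F δ) ≤ Real.log (C / δ ^ k) := Real.log_natCast_le_log_of_le hCδ hF
      _ = Real.log C + k * -Real.log δ := by
        rw [Real.log_div (by positivity) (pow_pos hδ₀ k).ne', Real.log_pow]
        ring
  rw [boxRatio, div_add' _ _ _ hL.ne', div_le_div_iff_of_pos_right hL]
  exact hlog

lemma isBoundedUnder_boxRatio_of_coverNum_le {F : Set α} {C : ℝ} {k : ℕ} (hC : 1 ≤ C)
    (hF : ∀ᶠ δ in 𝓝[>] 0, (coverNum F δ : ℝ) ≤ C / δ ^ k) :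
    IsBoundedUnder (· ≤ ·) (𝓝[>] 0) (boxRatio F) := by
  refine ⟨k + 1, eventually_map.2 ?_⟩
  filter_upwards [Ioo_mem_nhdsGT one_pos, hF,
    (tendsto_div_neg_log_nhdsGT_zero (Real.log C)).eventually (eventually_lt_nhds one_pos)]
    with δ ⟨hδ₀, hδ₁⟩ hFδ hCδ
  linarith [boxRatio_le_of_coverNum_le hC hδ₀ hδ₁ hFδ]

lemma isBoundedUnder_boxRatio_of_isBounded {F : Set (ℝ × ℝ)} (hF : Bornology.IsBounded F) :
    IsBoundedUnder (· ≤ ·) (𝓝[>] 0) (boxRatio F) := by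
  obtain ⟨R₀, hFR₀⟩ := hF.subset_closedBall 0
  set R := max R₀ 1
  have hR : 1 ≤ R := le_max_right _ _
  have hFR : F ⊆ closedBall (0 : ℝ) R ×ˢ closedBall (0 : ℝ) R := by
    rw [closedBall_prod_same]
    exact hFR₀.trans (closedBall_subset_closedBall (le_max_left _ _))
  refine isBoundedUnder_boxRatio_of_coverNum_le (C := 4 * R ^ 2) (k := 2) (by nlinarith) ?_
  filter_upwards [Ioo_mem_nhdsGT one_pos] with δ ⟨hδ₀, hδ₁⟩
  have hball : (coverNum (closedBall (0 : ℝ) R) δ : ℝ) ≤ 2 * R / δ := by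
    have hN := Real.coverNum_le_floor_diam_div_add_one isBounded_closedBall hδ₀ (S := closedBall 0 R)
    have hdiam : diam (closedBall (0 : ℝ) R) / (2 * δ) ≤ R / δ := by
      rw [div_le_div_iff₀ (by positivity) hδ₀]
      nlinarith [diam_closedBall (x := (0 : ℝ)) (by linarith : (0 : ℝ) ≤ R)]
    have hRδ : 1 ≤ R / δ := (one_le_div hδ₀).2 (by linarith)
    calc (coverNum (closedBall (0 : ℝ) R) δ : ℝ)
        ≤ ⌊diam (closedBall (0 : ℝ) R) / (2 * δ)⌋₊ + 1 := by exact_mod_cast hN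
      _ ≤ R / δ + R / δ := by
        gcongr
        exact (Nat.floor_le (by positivity)).trans hdiam
      _ = 2 * R / δ := by ring
  have hK := isCompact_closedBall (0 : ℝ) R
  calc (coverNum F δ : ℝ)
      ≤ coverNum (closedBall (0 : ℝ) R) δ * coverNum (closedBall (0 : ℝ) R) δ := by
        exact_mod_cast (coverNum_mono (hK.prod hK).totallyBounded hFR hδ₀).trans
          (coverNum_prod_le hK.totallyBounded hK.totallyBounded hδ₀)
    _ ≤ (2 * R / δ) * (2 * R / δ) := by gcongr
    _ = 4 * R ^ 2 / δ ^ 2 := by ring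

lemma boxRatio_le_of_coverNum_le_mul_add {F : Set α} {E₁ : Set β} {E₂ : Set γ} {C δ : ℝ}
    (hC : 1 ≤ C) (hδ₀ : 0 < δ) (hδ₁ : δ < 1)
    (hF : (coverNum F δ : ℝ) ≤ C * (coverNum E₁ δ + coverNum E₂ δ)) :
    boxRatio F δ ≤ Real.log (2 * C) / -Real.log δ + max (boxRatio E₁ δ) (boxRatio E₂ δ) := by
  have hL : 0 < -Real.log δ := neg_pos.2 (Real.log_neg hδ₀ hδ₁)
  set M := max (coverNum E₁ δ) (coverNum E₂ δ)
  have hlog : Real.log (coverNum F δ) ≤ Real.log (2 * C) + Real.log M := by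
    rcases M.eq_zero_or_pos with hM | hM
    · have hE : coverNum E₁ δ = 0 ∧ coverNum E₂ δ = 0 := Nat.max_eq_zero_iff.1 hM
      rw [hE.1, hE.2] at hF
      have hF0 : coverNum F δ = 0 := by simpa using hF
      simp [hF0, hM, Real.log_nonneg (by linarith : (1 : ℝ) ≤ 2 * C)]
    · have hsum : (coverNum E₁ δ + coverNum E₂ δ : ℝ) ≤ 2 * M := by
        have h₁ : (coverNum E₁ δ : ℝ) ≤ M := by exact_mod_cast le_max_left _ _
        have h₂ : (coverNum E₂ δ : ℝ) ≤ M := by exact_mod_cast le_max_right _ _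
        linarith
      have hM₁ : (1 : ℝ) ≤ M := by exact_mod_cast hM
      calc Real.log (coverNum F δ) ≤ Real.log (2 * C * M) :=
            Real.log_natCast_le_log_of_le (by nlinarith) (by nlinarith)
        _ = Real.log (2 * C) + Real.log M := Real.log_mul (by positivity) (by positivity)
  rw [boxRatio, boxRatio, boxRatio, max_div_div_right hL.le, ← add_div,
    div_le_div_iff_of_pos_right hL, ← Real.monotone_log_natCast.map_max]
  exact hlog

theorem upperBoxDim_le_max_of_coverNum_le {F : Set α} {E₁ : Set β} {E₂ : Set γ} {C : ℝ}
    (hC : 1 ≤ C) (h₁ : IsBoundedUnder (· ≤ ·) (𝓝[>] 0) (boxRatio E₁))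
    (h₂ : IsBoundedUnder (· ≤ ·) (𝓝[>] 0) (boxRatio E₂))
    (hF : ∀ᶠ δ in 𝓝[>] 0, (coverNum F δ : ℝ) ≤ C * (coverNum E₁ δ + coverNum E₂ δ)) :
    upperBoxDim F ≤ max (upperBoxDim E₁) (upperBoxDim E₂) := by
  change limsup (boxRatio F) (𝓝[>] 0) ≤
    max (limsup (boxRatio E₁) (𝓝[>] 0)) (limsup (boxRatio E₂) (𝓝[>] 0))
  set D := max (limsup (boxRatio E₁) (𝓝[>] 0)) (limsup (boxRatio E₂) (𝓝[>] 0))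
  refine le_of_forall_pos_le_add fun ε hε => ?_
  have hD : D < D + ε / 2 := lt_add_of_pos_right D (half_pos hε)
  have hF_cobdd : IsCoboundedUnder (· ≤ ·) (𝓝[>] 0) (boxRatio F) :=
    isCoboundedUnder_le_of_eventually_le _ (x := 0) <| by
      filter_upwards [Ioo_mem_nhdsGT one_pos] with δ ⟨hδ₀, hδ₁⟩
      exact boxRatio_nonneg F hδ₀ hδ₁
  refine limsup_le_of_le hF_cobdd ?_
  filter_upwards [Ioo_mem_nhdsGT one_pos, hF,
    eventually_lt_of_limsup_lt ((le_max_left _ _).trans_lt hD) h₁,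
    eventually_lt_of_limsup_lt ((le_max_right _ _).trans_lt hD) h₂,
    (tendsto_div_neg_log_nhdsGT_zero (Real.log (2 * C))).eventually
      (eventually_lt_nhds (half_pos hε))] with δ ⟨hδ₀, hδ₁⟩ hFδ hE₁ hE₂ hCδ
  linarith [boxRatio_le_of_coverNum_le_mul_add hC hδ₀ hδ₁ hFδ, max_lt hE₁ hE₂]

end BoxDimension

section Graph

variable {h : ℝ → ℝ} {δ : ℝ}

def column (δ : ℝ) (j : ℕ) : Set ℝ := Icc (j * δ) ((j + 1) * δ) ∩ Icc 0 1

lemma column_subset (δ : ℝ) (j : ℕ) : column δ j ⊆ Icc 0 1 := inter_subset_right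

lemma isCompact_image_column (hh : ContinuousOn h (Icc 0 1)) (δ : ℝ) (j : ℕ) :
    IsCompact (h '' column δ j) :=
  (isCompact_Icc.inter_right isClosed_Icc).image_of_continuousOn (hh.mono (column_subset δ j))

lemma isPreconnected_image_column (hh : ContinuousOn h (Icc 0 1)) (δ : ℝ) (j : ℕ) :
    IsPreconnected (h '' column δ j) :=
  (ordConnected_Icc.inter ordConnected_Icc).isPreconnected.image h (hh.mono (column_subset δ j))

lemma isCompact_fnGraphOn_column (hh : ContinuousOn h (Icc 0 1)) (δ : ℝ) (j : ℕ) :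
    IsCompact (fnGraphOn h (column δ j)) :=
  (isCompact_Icc.inter_right isClosed_Icc).image_of_continuousOn
    (continuousOn_id.prodMk (hh.mono (column_subset δ j)))

lemma isCompact_G (hh : ContinuousOn h (Icc 0 1)) : IsCompact (G h) :=
  isCompact_Icc.image_of_continuousOn (continuousOn_id.prodMk hh)

lemma G_eq_biUnion_fnGraphOn_column (h : ℝ → ℝ) (hδ : 0 < δ) :
    G h = ⋃ j ∈ Finset.range (⌊1 / δ⌋₊ + 1), fnGraphOn h (column δ j) := by
  refine (Subset.antisymm ?_ (iUnion₂_subset fun j _ => image_mono (column_subset δ j)))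
  rintro _ ⟨x, hx, rfl⟩
  have hj : ⌊x / δ⌋₊ < ⌊1 / δ⌋₊ + 1 := Nat.lt_succ_of_le (Nat.floor_mono (by gcongr; exact hx.2))
  have hjx : ⌊x / δ⌋₊ * δ ≤ x := (le_div_iff₀ hδ).1 (Nat.floor_le (div_nonneg hx.1 hδ.le))
  have hxj : x < (⌊x / δ⌋₊ + 1) * δ := (div_lt_iff₀ hδ).1 (Nat.lt_floor_add_one _)
  exact mem_iUnion₂.2 ⟨_, Finset.mem_range.2 hj, x, ⟨⟨hjx, hxj.le⟩, hx⟩, rfl⟩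

lemma coverNum_fnGraphOn_column_le (hh : ContinuousOn h (Icc 0 1)) (hδ : 0 < δ) (j : ℕ) :
    (coverNum (fnGraphOn h (column δ j)) δ : ℝ) ≤ diam (h '' column δ j) / (2 * δ) + 1 := by
  have hK := isCompact_image_column hh δ j
  have hsub : fnGraphOn h (column δ j) ⊆ closedBall ((j + 1 / 2) * δ) δ ×ˢ (h '' column δ j) := by
    rintro _ ⟨x, hx, rfl⟩
    refine ⟨?_, mem_image_of_mem h hx⟩
    rw [mem_closedBall, Real.dist_eq, abs_le]
    constructor <;> linarith [hx.1.1, hx.1.2]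
  have hN : coverNum (fnGraphOn h (column δ j)) δ ≤ ⌊diam (h '' column δ j) / (2 * δ)⌋₊ + 1 :=
    calc coverNum (fnGraphOn h (column δ j)) δ
        ≤ coverNum (closedBall ((j + 1 / 2) * δ) δ ×ˢ (h '' column δ j)) δ :=
          coverNum_mono ((isCompact_closedBall _ _).prod hK).totallyBounded hsub hδ
      _ ≤ 1 * coverNum (h '' column δ j) δ :=
          (coverNum_prod_le (isCompact_closedBall _ _).totallyBounded hK.totallyBounded hδ).trans
            (Nat.mul_le_mul_right _ (coverNum_closedBall_le_one _ _))
      _ ≤ ⌊diam (h '' column δ j) / (2 * δ)⌋₊ + 1 := by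
          rw [one_mul]
          exact Real.coverNum_le_floor_diam_div_add_one hK.isBounded hδ
  calc (coverNum (fnGraphOn h (column δ j)) δ : ℝ)
      ≤ (⌊diam (h '' column δ j) / (2 * δ)⌋₊ : ℝ) + 1 := by exact_mod_cast hN
    _ ≤ diam (h '' column δ j) / (2 * δ) + 1 := by
      gcongr
      exact Nat.floor_le (div_nonneg diam_nonneg (by positivity))

lemma coverNum_G_le_sum_diam (hh : ContinuousOn h (Icc 0 1)) (hδ : 0 < δ) :
    (coverNum (G h) δ : ℝ) ≤
      ∑ j ∈ Finset.range (⌊1 / δ⌋₊ + 1), (diam (h '' column δ j) / (2 * δ) + 1) := by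
  rw [G_eq_biUnion_fnGraphOn_column h hδ]
  calc (coverNum (⋃ j ∈ Finset.range (⌊1 / δ⌋₊ + 1), fnGraphOn h (column δ j)) δ : ℝ)
      ≤ ∑ j ∈ Finset.range (⌊1 / δ⌋₊ + 1), (coverNum (fnGraphOn h (column δ j)) δ : ℝ) := by
        exact_mod_cast coverNum_biUnion_le _
          (fun j _ => (isCompact_fnGraphOn_column hh δ j).totallyBounded) hδ
    _ ≤ _ := Finset.sum_le_sum fun j _ => coverNum_fnGraphOn_column_le hh hδ j

open scoped Classical in
lemma card_filter_column_inter_closedBall_le_four (hδ : 0 < δ) (s : Finset ℕ) (y : ℝ) :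
    (s.filter fun j => (column δ j ∩ closedBall y δ).Nonempty).card ≤ 4 := by
  set a := ⌊(y + δ) / δ⌋₊
  refine (Finset.card_le_card (t := Finset.Icc (a - 3) a) fun j hj => ?_).trans
    (by rw [Nat.card_Icc]; omega)
  obtain ⟨-, x, ⟨⟨hjx, hxj⟩, hx₀, -⟩, hxy⟩ := Finset.mem_filter.1 hj
  rw [mem_closedBall, Real.dist_eq, abs_le] at hxy
  have hj₀ : (0 : ℝ) ≤ j * δ := by positivity
  have hja : j ≤ a := Nat.le_floor ((le_div_iff₀ hδ).2 (by linarith))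
  have haj : a < j + 4 := (Nat.floor_lt (div_nonneg (by linarith) hδ.le)).2
    ((div_lt_iff₀ hδ).2 (by push_cast; linarith))
  exact Finset.mem_Icc.2 ⟨by omega, hja⟩

open scoped Classical in
lemma diam_image_column_le (hh : ContinuousOn h (Icc 0 1)) (hδ : 0 < δ) {t : Finset (ℝ × ℝ)}
    (ht : G h ⊆ ⋃ p ∈ t, closedBall p δ) (j : ℕ) :
    diam (h '' column δ j) ≤
      2 * δ * (t.filter fun p => (fnGraphOn h (column δ j) ∩ closedBall p δ).Nonempty).card := by
  refine Real.diam_le_of_subset_biUnion_closedBall (c := Prod.snd)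
    (isPreconnected_image_column hh δ j) hδ.le ?_
  rintro _ ⟨x, hx, rfl⟩
  obtain ⟨p, hp, hxp⟩ := mem_iUnion₂.1 (ht ⟨x, column_subset δ j hx, rfl⟩)
  refine mem_iUnion₂.2 ⟨p, Finset.mem_filter.2 ⟨hp, _, ⟨x, hx, rfl⟩, hxp⟩, ?_⟩
  rw [← closedBall_prod_same p.1 p.2] at hxp
  exact hxp.2

open scoped Classical in
lemma sum_diam_image_column_le (hh : ContinuousOn h (Icc 0 1)) (hδ : 0 < δ) (J : ℕ) :
    ∑ j ∈ Finset.range J, diam (h '' column δ j) ≤ 8 * δ * coverNum (G h) δ := by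
  obtain ⟨t, ht, hGt⟩ := (isCompact_G hh).totallyBounded.exists_card_eq_coverNum hδ
  set r : ℕ → ℝ × ℝ → Prop := fun j p => (fnGraphOn h (column δ j) ∩ closedBall p δ).Nonempty
  have hcount : ∑ j ∈ Finset.range J, (t.bipartiteAbove r j).card ≤ 4 * t.card := by
    rw [Finset.sum_card_bipartiteAbove_eq_sum_card_bipartiteBelow, mul_comm, ← smul_eq_mul]
    refine Finset.sum_le_card_nsmul _ _ _ fun p _ => ?_
    refine (Finset.card_le_card (Finset.monotone_filter_right _ fun j _ hj => ?_)).trans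
      (card_filter_column_inter_closedBall_le_four hδ _ p.1)
    obtain ⟨_, ⟨x, hx, rfl⟩, hxp⟩ := hj
    rw [← closedBall_prod_same p.1 p.2] at hxp
    exact ⟨x, hx, hxp.1⟩
  calc ∑ j ∈ Finset.range J, diam (h '' column δ j)
      ≤ ∑ j ∈ Finset.range J, 2 * δ * ((t.bipartiteAbove r j).card : ℝ) :=
        Finset.sum_le_sum fun j _ => diam_image_column_le hh hδ hGt j
    _ = 2 * δ * ((∑ j ∈ Finset.range J, (t.bipartiteAbove r j).card : ℕ) : ℝ) := by
        rw [Nat.cast_sum, Finset.mul_sum]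
    _ ≤ 2 * δ * ((4 * t.card : ℕ) : ℝ) := by gcongr
    _ = 8 * δ * coverNum (G h) δ := by
        rw [← ht]
        push_cast
        ring

lemma floor_one_div_add_one_le_three_mul_coverNum_G (hh : ContinuousOn h (Icc 0 1))
    (hδ : 0 < δ) : ((⌊1 / δ⌋₊ + 1 : ℕ) : ℝ) ≤ 3 * coverNum (G h) δ := by
  obtain ⟨t, ht, hGt⟩ := (isCompact_G hh).totallyBounded.exists_card_eq_coverNum hδ
  have hcov : Icc (0 : ℝ) 1 ⊆ ⋃ p ∈ t, closedBall p.1 δ := by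
    intro x hx
    obtain ⟨p, hp, hxp⟩ := mem_iUnion₂.1 (hGt ⟨x, hx, rfl⟩)
    rw [← closedBall_prod_same p.1 p.2] at hxp
    exact mem_iUnion₂.2 ⟨p, hp, hxp.1⟩
  have hN := Real.diam_le_of_subset_biUnion_closedBall isPreconnected_Icc hδ.le hcov
  rw [Real.diam_Icc zero_le_one, sub_zero, ht] at hN
  have hN₁ : (1 : ℝ) ≤ coverNum (G h) δ :=
    Nat.one_le_cast.2 (Nat.pos_of_ne_zero fun h₀ => by norm_num [h₀] at hN)
  have hfloor : (⌊1 / δ⌋₊ : ℝ) ≤ 1 / δ := Nat.floor_le (by positivity)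
  have hδN : 1 / δ ≤ 2 * coverNum (G h) δ := by
    rw [div_le_iff₀ hδ]
    linarith
  push_cast
  linarith

lemma diam_image_mul_le {s : Set ℝ} {f g : ℝ → ℝ} {B : ℝ}
    (hf : Bornology.IsBounded (f '' s)) (hg : Bornology.IsBounded (g '' s))
    (hfB : ∀ x ∈ s, |f x| ≤ B) (hgB : ∀ x ∈ s, |g x| ≤ B) :
    diam ((f * g) '' s) ≤ B * diam (f '' s) + B * diam (g '' s) := by
  rcases s.eq_empty_or_nonempty with rfl | hs
  · simp
  refine diam_le_of_forall_dist_le_of_nonempty (hs.image _) ?_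
  rintro _ ⟨u, hu, rfl⟩ _ ⟨v, hv, rfl⟩
  have hdf := dist_le_diam_of_mem hf (mem_image_of_mem f hu) (mem_image_of_mem f hv)
  have hdg := dist_le_diam_of_mem hg (mem_image_of_mem g hu) (mem_image_of_mem g hv)
  calc dist ((f * g) u) ((f * g) v) = |g v * (f u - f v) + f u * (g u - g v)| := by
        rw [Real.dist_eq, Pi.mul_apply, Pi.mul_apply]
        ring_nf
    _ ≤ |g v| * dist (f u) (f v) + |f u| * dist (g u) (g v) := by
        rw [Real.dist_eq, Real.dist_eq, ← abs_mul, ← abs_mul]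
        exact abs_add_le _ _
    _ ≤ B * diam (f '' s) + B * diam (g '' s) := by
        have hB : 0 ≤ B := (abs_nonneg _).trans (hfB u hu)
        gcongr
        exacts [hgB v hv, hfB u hu]

lemma sum_diam_image_column_mul_le {f g : ℝ → ℝ} (hf : ContinuousOn f (Icc 0 1))
    (hg : ContinuousOn g (Icc 0 1)) {B : ℝ} (hfB : ∀ x ∈ Icc (0 : ℝ) 1, |f x| ≤ B)
    (hgB : ∀ x ∈ Icc (0 : ℝ) 1, |g x| ≤ B) (hδ : 0 < δ) (J : ℕ) :
    ∑ j ∈ Finset.range J, diam ((f * g) '' column δ j) ≤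
      8 * B * δ * (coverNum (G f) δ + coverNum (G g) δ) := by
  have hB : 0 ≤ B := (abs_nonneg _).trans (hfB 0 ⟨le_rfl, zero_le_one⟩)
  calc ∑ j ∈ Finset.range J, diam ((f * g) '' column δ j)
      ≤ ∑ j ∈ Finset.range J, (B * diam (f '' column δ j) + B * diam (g '' column δ j)) :=
        Finset.sum_le_sum fun j _ => diam_image_mul_le (isCompact_image_column hf δ j).isBounded
          (isCompact_image_column hg δ j).isBounded (fun x hx => hfB x (column_subset δ j hx))
          (fun x hx => hgB x (column_subset δ j hx))
    _ = B * ∑ j ∈ Finset.range J, diam (f '' column δ j) +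
        B * ∑ j ∈ Finset.range J, diam (g '' column δ j) := by
        rw [Finset.sum_add_distrib, Finset.mul_sum, Finset.mul_sum]
    _ ≤ B * (8 * δ * coverNum (G f) δ) + B * (8 * δ * coverNum (G g) δ) := by
        gcongr
        exacts [sum_diam_image_column_le hf hδ J, sum_diam_image_column_le hg hδ J]
    _ = 8 * B * δ * (coverNum (G f) δ + coverNum (G g) δ) := by ring

lemma coverNum_G_mul_le {f g : ℝ → ℝ} (hf : ContinuousOn f (Icc 0 1))
    (hg : ContinuousOn g (Icc 0 1)) {B : ℝ} (hfB : ∀ x ∈ Icc (0 : ℝ) 1, |f x| ≤ B)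
    (hgB : ∀ x ∈ Icc (0 : ℝ) 1, |g x| ≤ B) (hδ : 0 < δ) :
    (coverNum (G (f * g)) δ : ℝ) ≤ (4 * B + 3) * (coverNum (G f) δ + coverNum (G g) δ) := by
  set J := ⌊1 / δ⌋₊ + 1
  have hJ : (J : ℝ) ≤ 3 * coverNum (G f) δ := floor_one_div_add_one_le_three_mul_coverNum_G hf hδ
  have hNg : (0 : ℝ) ≤ coverNum (G g) δ := Nat.cast_nonneg _
  calc (coverNum (G (f * g)) δ : ℝ)
      ≤ ∑ j ∈ Finset.range J, (diam ((f * g) '' column δ j) / (2 * δ) + 1) :=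
        coverNum_G_le_sum_diam (hf.mul hg) hδ
    _ = (∑ j ∈ Finset.range J, diam ((f * g) '' column δ j)) / (2 * δ) + J := by
        rw [Finset.sum_add_distrib, ← Finset.sum_div]
        simp
    _ ≤ 8 * B * δ * (coverNum (G f) δ + coverNum (G g) δ) / (2 * δ) + 3 * coverNum (G f) δ := by
        gcongr
        exact sum_diam_image_column_mul_le hf hg hfB hgB hδ J
    _ = 4 * B * (coverNum (G f) δ + coverNum (G g) δ) + 3 * coverNum (G f) δ := by
        field_simp
        ring
    _ ≤ (4 * B + 3) * (coverNum (G f) δ + coverNum (G g) δ) := by linarith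

end Graph

theorem upperBoxDim_graph_mul_le (f g : ℝ → ℝ)
    (hf : ContinuousOn f (Set.Icc 0 1)) (hg : ContinuousOn g (Set.Icc 0 1)) :
    upperBoxDim (G (f * g)) ≤ max (upperBoxDim (G f)) (upperBoxDim (G g)) := by
  obtain ⟨Bf, hBf⟩ := isCompact_Icc.exists_bound_of_continuousOn hf
  obtain ⟨Bg, hBg⟩ := isCompact_Icc.exists_bound_of_continuousOn hg
  have hfB : ∀ x ∈ Icc (0 : ℝ) 1, |f x| ≤ max Bf Bg := fun x hx =>
    (hBf x hx).trans (le_max_left _ _)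
  have hgB : ∀ x ∈ Icc (0 : ℝ) 1, |g x| ≤ max Bf Bg := fun x hx =>
    (hBg x hx).trans (le_max_right _ _)
  have hB : 0 ≤ max Bf Bg := (abs_nonneg _).trans (hfB 0 ⟨le_rfl, zero_le_one⟩)
  refine upperBoxDim_le_max_of_coverNum_le (C := 4 * max Bf Bg + 3) (by linarith)
    (isBoundedUnder_boxRatio_of_isBounded (isCompact_G hf).isBounded)
    (isBoundedUnder_boxRatio_of_isBounded (isCompact_G hg).isBounded) ?_
  filter_upwards [self_mem_nhdsWithin] with δ hδ
  exact coverNum_G_mul_le hf hg hfB hgB hδ
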